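/- Let f, g, L be integers with 1 ≤ g ≤ f. Then (−1)^g · [L = 0] · [2 ≤ f] = C(f−2, L) · C(L−1, g−2) + ∑_{ℓ ≤ f−g−2} C(f−g, g−L+ℓ) · C(g+ℓ−1, ℓ) − ∑_{L−g+1 ≤ ℓ} C(f, 2ℓ+2g−L) · C(g+ℓ−1, ℓ), where [P] is 1 if P holds and 0 otherwise, and both sums range over integers ℓ (only finitely many terms are nonzero). -/

import Mathlib

/-!
Fix `g` and write `R(f, L)` for the right-hand side. Pascal's rule in the upper index turns
every term of `R(f + 1, L)` into the corresponding terms of `R(f, L)` and `R(f, L + 1)`, up to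
the terms that cross a summation bound; these form a boundary term `B(f, L)`. The left-hand
side obeys the same recursion: Pascal's rule and `C(x, k) C(k, j) = C(x, j) C(x - j, k - j)`,
both valid for all integers `x`, cancel `B(f, L)` except for the failure of the symmetry
`C(L, j) = C(L, L - j)` at `L = -1` (and for the degenerate case `f = g = 1`). Induction on `f`
from `f = g`, where both sums are empty, gives the identity.
-/

/-- The generalized binomial coefficient `C(x, k)` for integers `x, k`:
`x(x-1)⋯(x-k+1)/k!` when `k ≥ 0` and `0` when `k < 0`. -/
noncomputable def zchoose (x k : ℤ) : ℤ := if 0 ≤ k then Ring.choose x k.toNat else 0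

theorem zchoose_of_neg (x : ℤ) {k : ℤ} (hk : k < 0) : zchoose x k = 0 := by
  simp [zchoose, hk]

theorem zchoose_natCast (x : ℤ) (k : ℕ) : zchoose x k = Ring.choose x k := by
  simp [zchoose]

theorem zchoose_zero_right (x : ℤ) : zchoose x 0 = 1 := by
  simpa using zchoose_natCast x 0

theorem zchoose_one_right (x : ℤ) : zchoose x 1 = x := by
  simpa using zchoose_natCast x 1

theorem zchoose_natCast_natCast (n k : ℕ) : zchoose n k = n.choose k := by
  rw [zchoose_natCast, Ring.choose_natCast]

theorem zchoose_succ_succ (x k : ℤ) :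
    zchoose (x + 1) (k + 1) = zchoose x k + zchoose x (k + 1) := by
  obtain hk | rfl | hk : k < -1 ∨ k = -1 ∨ 0 ≤ k := by omega
  · rw [zchoose_of_neg _ (by omega : k + 1 < 0), zchoose_of_neg _ (by omega : k + 1 < 0),
      zchoose_of_neg _ (by omega : k < 0), add_zero]
  · simp [zchoose_zero_right, zchoose_of_neg]
  · lift k to ℕ using hk
    exact_mod_cast Ring.choose_succ_succ x k

theorem zchoose_eq_zero_of_lt {x k : ℤ} (hx : 0 ≤ x) (h : x < k) : zchoose x k = 0 := by
  lift x to ℕ using hx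
  lift k to ℕ using by omega
  rw [zchoose_natCast_natCast, Nat.choose_eq_zero_of_lt (by omega), Nat.cast_zero]

theorem zchoose_symm {x : ℤ} (hx : 0 ≤ x) (k : ℤ) : zchoose x (x - k) = zchoose x k := by
  obtain hk | hk | hk : k < 0 ∨ x < k ∨ (0 ≤ k ∧ k ≤ x) := by omega
  · rw [zchoose_of_neg x hk, zchoose_eq_zero_of_lt hx (by omega)]
  · rw [zchoose_of_neg x (by omega), zchoose_eq_zero_of_lt hx hk]
  · lift x to ℕ using hx
    lift k to ℕ using hk.1
    rw [← Nat.cast_sub (by omega), zchoose_natCast_natCast, zchoose_natCast_natCast,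
      Nat.choose_symm (by omega)]

theorem zchoose_symm_of_eq_add {x : ℤ} (hx : 0 ≤ x) {a b : ℤ} (h : x = a + b) :
    zchoose x a = zchoose x b := by
  rw [← zchoose_symm hx, show x - a = b by omega]

theorem zchoose_neg_one {k : ℤ} (hk : 0 ≤ k) : zchoose (-1) k = k.negOnePow := by
  lift k to ℕ using hk
  rw [zchoose_natCast, Ring.choose_neg, add_sub_cancel_left, Ring.choose_natCast,
    Nat.choose_self, Nat.cast_one, Units.smul_def, smul_eq_mul, mul_one]

theorem zchoose_mul_zchoose (x k j : ℤ) :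
    zchoose x k * zchoose k j = zchoose x j * zchoose (x - j) (k - j) := by
  obtain hj | hkj | ⟨hj, hjk⟩ : j < 0 ∨ k < j ∨ (0 ≤ j ∧ j ≤ k) := by omega
  · simp [zchoose_of_neg _ hj]
  · rw [zchoose_of_neg _ (by omega : k - j < 0), mul_zero]
    obtain hk | hk := lt_or_ge k 0
    · rw [zchoose_of_neg _ hk, zero_mul]
    · rw [zchoose_eq_zero_of_lt hk hkj, mul_zero]
  · lift j to ℕ using hj
    lift k to ℕ using by omega
    rw [← Nat.cast_sub (by omega), zchoose_natCast_natCast, zchoose_natCast, zchoose_natCast,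
      zchoose_natCast, ← Ring.choose_smul_choose x (by omega : j ≤ k), nsmul_eq_mul, mul_comm]

theorem zchoose_mul_zchoose_sub_one_eq_zero (x : ℤ) {k : ℤ} (hk : 0 < k) :
    zchoose x k * zchoose (k - 1) x = 0 := by
  obtain hx | hx | hx : x < 0 ∨ (0 ≤ x ∧ x < k) ∨ k ≤ x := by omega
  · rw [zchoose_of_neg _ hx, mul_zero]
  · rw [zchoose_eq_zero_of_lt hx.1 hx.2, zero_mul]
  · rw [zchoose_eq_zero_of_lt (x := k - 1) (by omega) (by omega), mul_zero]

theorem zchoose_add_two (x k : ℤ) :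
    zchoose (x + 2) (k + 1) = zchoose x (k - 1) + 2 * zchoose x k + zchoose x (k + 1) := by
  linear_combination (norm := ring_nf) zchoose_succ_succ (x + 1) k
    + zchoose_succ_succ x (k - 1) + zchoose_succ_succ x k

theorem zchoose_mul_zchoose_add_two (x k j : ℤ) :
    zchoose (x - j + 2) (k - j + 1) * zchoose x j + zchoose x (k - 1) * zchoose (k - 1) (j - 1)
      = zchoose (x + 2) (k + 1) * zchoose k j + zchoose x (k + 1) * zchoose k (j - 1) := by
  linear_combination (norm := ring_nf) zchoose x j * zchoose_add_two (x - j) (k - j)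
    - zchoose k j * zchoose_add_two x k
    - zchoose_mul_zchoose x (k - 1) j - 2 * zchoose_mul_zchoose x k j
    - zchoose_mul_zchoose x (k + 1) j
    - zchoose x (k - 1) * zchoose_succ_succ (k - 1) (j - 1)
    + zchoose x (k + 1) * zchoose_succ_succ k (j - 1)

theorem zchoose_mul_sub_zchoose_symm (x : ℤ) {j : ℤ} (hj : 0 ≤ j) (k : ℤ) :
    zchoose x (k + 1) * (zchoose k j - zchoose k (k - j))
      = if k = -1 then (j.negOnePow : ℤ) else 0 := by
  obtain hk | rfl | hk : k < -1 ∨ k = -1 ∨ 0 ≤ k := by omega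
  · rw [zchoose_of_neg x (by omega), zero_mul, if_neg (by omega)]
  · rw [if_pos rfl, neg_add_cancel, zchoose_zero_right, zchoose_neg_one hj,
      zchoose_of_neg _ (by omega), one_mul, sub_zero]
  · rw [zchoose_symm hk, sub_self, mul_zero, if_neg (by omega)]

theorem zchoose_one_mul_zchoose_self (k : ℤ) :
    zchoose 1 (k + 1) * zchoose k k = if k = 0 then 1 else 0 := by
  obtain hk | rfl | hk : k < 0 ∨ k = 0 ∨ 0 < k := by omega
  · rw [zchoose_of_neg k hk, mul_zero, if_neg (by omega)]
  · rw [zero_add, zchoose_one_right, zchoose_zero_right, one_mul, if_pos rfl]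
  · rw [zchoose_eq_zero_of_lt zero_le_one (by omega), zero_mul, if_neg (by omega)]

theorem finsum_add_add_ite_eq {α M : Type*} [AddCommMonoid M] [DecidableEq α] {a b : α → M}
    (ha : a.HasFiniteSupport) (hb : b.HasFiniteSupport) (i : α) (c : M) :
    ∑ᶠ x, (a x + b x + if x = i then c else 0) = ∑ᶠ x, a x + ∑ᶠ x, b x + c := by
  have hc : Function.HasFiniteSupport fun x => if x = i then c else 0 :=
    (Set.finite_singleton i).subset (Function.support_subset_iff'.2 fun _ hx => if_neg hx)
  have hab : Function.HasFiniteSupport fun x => a x + b x := ha.add hb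
  rw [finsum_add_distrib hab hc, finsum_add_distrib ha hb,
    finsum_eq_single _ i fun _ hx => if_neg hx, if_pos rfl]

namespace BinomialIdentity

open Function

noncomputable def lowTerm (f g L ℓ : ℤ) : ℤ :=
  if ℓ ≤ f - g - 2 then zchoose (f - g) (g - L + ℓ) * zchoose (g + ℓ - 1) ℓ else 0

noncomputable def highTerm (f g L ℓ : ℤ) : ℤ :=
  if L - g + 1 ≤ ℓ then zchoose f (2 * ℓ + 2 * g - L) * zchoose (g + ℓ - 1) ℓ else 0

noncomputable def lowSum (f g L : ℤ) : ℤ := ∑ᶠ ℓ, lowTerm f g L ℓ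

noncomputable def highSum (f g L : ℤ) : ℤ := ∑ᶠ ℓ, highTerm f g L ℓ

theorem lowTerm_eq_zero {f g L ℓ : ℤ} (h : ℓ < 0 ∨ f - g - 2 < ℓ) :
    lowTerm f g L ℓ = 0 := by
  unfold lowTerm
  split_ifs with hℓ
  · rw [zchoose_of_neg (g + ℓ - 1) (by omega : ℓ < 0), mul_zero]
  · rfl

theorem highTerm_eq_zero {f g L ℓ : ℤ} (hf : 0 ≤ f) (h : ℓ < 0 ∨ f - g ≤ ℓ) :
    highTerm f g L ℓ = 0 := by
  unfold highTerm
  split_ifs with hℓ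
  · obtain h | h := h
    · rw [zchoose_of_neg _ h, mul_zero]
    · rw [zchoose_eq_zero_of_lt hf (by omega), zero_mul]
  · rfl

theorem lowTerm_hasFiniteSupport (f g L : ℤ) : (lowTerm f g L).HasFiniteSupport :=
  (Set.finite_Icc 0 (f - g - 2)).subset fun ℓ hℓ => by
    by_contra h
    exact hℓ (lowTerm_eq_zero (by simp only [Set.mem_Icc] at h; omega))

theorem highTerm_hasFiniteSupport {f : ℤ} (hf : 0 ≤ f) (g L : ℤ) :
    (highTerm f g L).HasFiniteSupport :=
  (Set.finite_Icc 0 (f - g)).subset fun ℓ hℓ => by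
    by_contra h
    exact hℓ (highTerm_eq_zero hf (by simp only [Set.mem_Icc] at h; omega))

theorem lowSum_self (g L : ℤ) : lowSum g g L = 0 :=
  finsum_eq_zero_of_forall_eq_zero fun _ => lowTerm_eq_zero (by omega)

theorem highSum_self {g : ℤ} (hg : 0 ≤ g) (L : ℤ) : highSum g g L = 0 :=
  finsum_eq_zero_of_forall_eq_zero fun _ => highTerm_eq_zero hg (by omega)

theorem lowTerm_add_one (f g L ℓ : ℤ) :
    lowTerm (f + 1) g L ℓ = lowTerm f g L ℓ + lowTerm f g (L + 1) ℓ
      + if ℓ = f - g - 1 then zchoose (f - g + 1) (f - L - 1) * zchoose (f - 2) (f - g - 1)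
        else 0 := by
  unfold lowTerm
  obtain hℓ | rfl | hℓ : ℓ ≤ f - g - 2 ∨ ℓ = f - g - 1 ∨ f - g - 1 < ℓ := by omega
  · rw [if_pos (by omega), if_pos hℓ, if_pos hℓ, if_neg (by omega)]
    linear_combination (norm := ring_nf)
      zchoose (g + ℓ - 1) ℓ * zchoose_succ_succ (f - g) (g - (L + 1) + ℓ)
  · rw [if_pos (by omega), if_neg (by omega), if_neg (by omega), if_pos rfl]
    ring_nf
  · rw [if_neg (by omega), if_neg (by omega), if_neg (by omega), if_neg (by omega)]
    ring

theorem highTerm_add_one (f g L ℓ : ℤ) :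
    highTerm (f + 1) g L ℓ = highTerm f g L ℓ + highTerm f g (L + 1) ℓ
      + if ℓ = L - g + 1 then zchoose f (L + 1) * zchoose L (L - g + 1) else 0 := by
  unfold highTerm
  obtain hℓ | rfl | hℓ : L - g + 2 ≤ ℓ ∨ ℓ = L - g + 1 ∨ ℓ < L - g + 1 := by omega
  · rw [if_pos (by omega), if_pos (by omega), if_pos (by omega), if_neg (by omega)]
    linear_combination (norm := ring_nf)
      zchoose (g + ℓ - 1) ℓ * zchoose_succ_succ f (2 * ℓ + 2 * g - (L + 1))
  · rw [if_pos le_rfl, if_pos le_rfl, if_neg (by omega), if_pos rfl]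
    linear_combination (norm := ring_nf)
      zchoose L (L - g + 1) * zchoose_succ_succ f (L + 1)
  · rw [if_neg (by omega), if_neg (by omega), if_neg (by omega), if_neg (by omega)]
    ring

theorem lowSum_add_one (f g L : ℤ) :
    lowSum (f + 1) g L = lowSum f g L + lowSum f g (L + 1)
      + zchoose (f - g + 1) (f - L - 1) * zchoose (f - 2) (f - g - 1) := by
  rw [lowSum, finsum_congr (lowTerm_add_one f g L),
    finsum_add_add_ite_eq (lowTerm_hasFiniteSupport f g L) (lowTerm_hasFiniteSupport f g _)]
  rfl

theorem highSum_add_one {f : ℤ} (hf : 0 ≤ f) (g L : ℤ) :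
    highSum (f + 1) g L = highSum f g L + highSum f g (L + 1)
      + zchoose f (L + 1) * zchoose L (L - g + 1) := by
  rw [highSum, finsum_congr (highTerm_add_one f g L),
    finsum_add_add_ite_eq (highTerm_hasFiniteSupport hf g L) (highTerm_hasFiniteSupport hf g _)]
  rfl

noncomputable def signIndicator (f g L : ℤ) : ℤ :=
  (g.negOnePow : ℤ) * (if L = 0 then 1 else 0) * (if 2 ≤ f then 1 else 0)

noncomputable def rhs (f g L : ℤ) : ℤ :=
  zchoose (f - 2) L * zchoose (L - 1) (g - 2) + lowSum f g L - highSum f g L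

noncomputable def boundary (f g L : ℤ) : ℤ :=
  zchoose (f - 2) (L - 1) * zchoose (L - 1) (g - 2) - zchoose (f - 2) (L + 1) * zchoose L (g - 2)
    + zchoose (f - g + 1) (f - L - 1) * zchoose (f - 2) (f - g - 1)
    - zchoose f (L + 1) * zchoose L (L - g + 1)

theorem rhs_self {g : ℤ} (hg : 1 ≤ g) (L : ℤ) : rhs g g L = signIndicator g g L := by
  rw [rhs, signIndicator, lowSum_self, highSum_self (by omega), add_zero, sub_zero]
  obtain hL | rfl | hL : L < 0 ∨ L = 0 ∨ 0 < L := by omega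
  · rw [zchoose_of_neg _ hL, zero_mul, if_neg (by omega), mul_zero, zero_mul]
  · rw [zchoose_zero_right, zero_sub, if_pos rfl, one_mul, mul_one]
    obtain rfl | hg : g = 1 ∨ 2 ≤ g := by omega
    · rw [zchoose_of_neg _ (by norm_num), if_neg (by norm_num), mul_zero]
    · rw [zchoose_neg_one (by omega), Int.negOnePow_sub, Int.negOnePow_even 2 even_two,
        if_pos hg, mul_one, mul_one]
  · rw [zchoose_mul_zchoose_sub_one_eq_zero _ hL, if_neg (by omega), mul_zero, zero_mul]

theorem rhs_add_one {f : ℤ} (hf : 0 ≤ f) (g L : ℤ) :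
    rhs (f + 1) g L = rhs f g L + rhs f g (L + 1) + boundary f g L := by
  rw [rhs, rhs, rhs, boundary, lowSum_add_one, highSum_add_one hf]
  linear_combination (norm := ring_nf) zchoose (L - 1) (g - 2) * zchoose_succ_succ (f - 2) (L - 1)

theorem boundary_of_two_le {f g : ℤ} (hg : 1 ≤ g) (hgf : g ≤ f) (hf : 2 ≤ f) (L : ℤ) :
    boundary f g L = if L = -1 then -(g.negOnePow : ℤ) else 0 := by
  have hcancel := zchoose_mul_zchoose_add_two (f - 2) L (g - 1)
  have hsymm₁ := zchoose_symm_of_eq_add (x := f - g + 1) (a := f - L - 1) (b := L - g + 2)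
    (by omega) (by ring)
  have hsymm₂ := zchoose_symm_of_eq_add (x := f - 2) (a := f - g - 1) (b := g - 1)
    (by omega) (by ring)
  have hdefect := zchoose_mul_sub_zchoose_symm f (j := g - 1) (by omega) L
  have hsign : ((g - 1).negOnePow : ℤ) = -g.negOnePow := by
    simp [Int.negOnePow_sub]
  rw [hsign] at hdefect
  rw [boundary, ← hdefect]
  linear_combination (norm := ring_nf) hcancel + zchoose (f - 2) (f - g - 1) * hsymm₁
    + zchoose (f - g + 1) (L - g + 2) * hsymm₂

theorem boundary_one_one (L : ℤ) : boundary 1 1 L = -(if L = 0 then 1 else 0) := by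
  rw [boundary, ← zchoose_one_mul_zchoose_self]
  simp only [zchoose_of_neg _ (by norm_num : (1 : ℤ) - 2 < 0),
    zchoose_of_neg _ (by norm_num : (1 : ℤ) - 1 - 1 < 0)]
  ring_nf

theorem boundary_eq {f g : ℤ} (hg : 1 ≤ g) (hgf : g ≤ f) (L : ℤ) :
    boundary f g L
      = signIndicator (f + 1) g L - signIndicator f g L - signIndicator f g (L + 1) := by
  obtain rfl | hf : f = 1 ∨ 2 ≤ f := by omega
  · obtain rfl : g = 1 := by omega
    rw [boundary_one_one, signIndicator, signIndicator, signIndicator]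
    split_ifs <;> simp_all
  · simp only [boundary_of_two_le hg hgf hf, signIndicator, if_pos hf,
      if_pos (by omega : 2 ≤ f + 1)]
    split_ifs <;> omega

theorem signIndicator_eq_rhs {g : ℤ} (hg : 1 ≤ g) (f : ℤ) (hgf : g ≤ f) (L : ℤ) :
    signIndicator f g L = rhs f g L := by
  induction f, hgf using Int.leInduction generalizing L with
  | base => exact (rhs_self hg L).symm
  | succ f hgf ih =>
    rw [rhs_add_one (by omega), ← ih, ← ih, boundary_eq hg hgf]
    ring

end BinomialIdentity

/-- For integers `f, g, L` with `1 ≤ g ≤ f`,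
`(−1)^g · [L = 0] · [2 ≤ f]
  = C(f−2, L) · C(L−1, g−2)
    + ∑_{ℓ ≤ f−g−2} C(f−g, g−L+ℓ) · C(g+ℓ−1, ℓ)
    − ∑_{L−g+1 ≤ ℓ} C(f, 2ℓ+2g−L) · C(g+ℓ−1, ℓ)`,
where both sums range over integers `ℓ` and have only finitely many nonzero terms. -/
theorem binomial_identity_Cj25_1 (f g L : ℤ) (h1 : 1 ≤ g) (h2 : g ≤ f) :
    (g.negOnePow : ℤ) * (if L = 0 then 1 else 0) * (if 2 ≤ f then 1 else 0)
      = zchoose (f - 2) L * zchoose (L - 1) (g - 2)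
        + (∑ᶠ ℓ : ℤ, if ℓ ≤ f - g - 2 then
            zchoose (f - g) (g - L + ℓ) * zchoose (g + ℓ - 1) ℓ else 0)
        - ∑ᶠ ℓ : ℤ, if L - g + 1 ≤ ℓ then
            zchoose f (2 * ℓ + 2 * g - L) * zchoose (g + ℓ - 1) ℓ else 0 :=
  BinomialIdentity.signIndicator_eq_rhs h1 f h2 L
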